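/- arXiv:0909.2720 — 2 statements merged into one kernel-verified Lean document; each statement's English description precedes it below -/
import Mathlib

section
/- In the deterministic case (γ₁ = γ₂ = 0) with constant α(z) = a, 0 < a ≤ 1 and ρ = 0, a C¹ curve (q, v, p) : [a₀,b₀] → ℝⁿ × ℝⁿ × ℝⁿ satisfies the generalized fractional HP equations dq^i/ds = v^i, dp_i/ds = ∂L/∂q^i − p_i·(a−1)/(s−t), p_i = ∂L/∂v^i if and only if the curve (q, p) satisfies the generalized fractional Hamiltonian equations dq^i/ds = ∂H/∂p_i, dp_i/ds = −∂H/∂q^i − p_i·(a−1)/(s−t), where H(q,p) = p·v(q,p) − L(q, v(q,p)) and v(q,p) is determined by the Legendre condition p = ∂L/∂v, assuming L is hyperregular. -/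
/-!
Since `V` inverts the Legendre map, `H(q,p) = ⟨p, v⟩ - L(q,v)` with `v = V(q,p)` is stationary in
`v` (because `∂L/∂v = p` there), so the variation of `v` drops out of its derivative (envelope
principle): `∂H/∂p = V(q,p)` and `∂H/∂q = -∂L/∂q(q, V(q,p))`. Once `v = V(q,p)`, which is
equivalent to `p = ∂L/∂v(q,v)`, the two systems therefore agree term by term; the damping term
`-p (a-1)/(s-t)` is the same on both sides.
-/

open ContinuousLinearMap
open scoped Matrix

section Calculus

variable {𝕜 : Type*} [NontriviallyNormedField 𝕜]
  {E F G : Type*} [NormedAddCommGroup E] [NormedSpace 𝕜 E] [NormedAddCommGroup F] [NormedSpace 𝕜 F]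
  [NormedAddCommGroup G] [NormedSpace 𝕜 G]

lemma fderiv_uncurry_apply_eq_add {f : E → F → G} {x : E} {y : F}
    (hf : DifferentiableAt 𝕜 (fun z : E × F => f z.1 z.2) (x, y)) (u : E) (w : F) :
    fderiv 𝕜 (fun z : E × F => f z.1 z.2) (x, y) (u, w) =
      fderiv 𝕜 (fun x' => f x' y) x u + fderiv 𝕜 (fun y' => f x y') y w := by
  have hx : HasFDerivAt (fun x' => f x' y) ((fderiv 𝕜 _ (x, y)).comp (inl 𝕜 E F)) x :=
    hf.hasFDerivAt.comp (f := fun x' => (x', y)) x (hasFDerivAt_prodMk_left x y)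
  have hy : HasFDerivAt (fun y' => f x y') ((fderiv 𝕜 _ (x, y)).comp (inr 𝕜 E F)) y :=
    hf.hasFDerivAt.comp y (hasFDerivAt_prodMk_right x y)
  rw [hx.fderiv, hy.fderiv, comp_apply, comp_apply, ← map_add, inl_apply, inr_apply, Prod.mk_add_mk,
    add_zero, zero_add]

variable {ι : Type*} [Fintype ι] {X : Type*} [NormedAddCommGroup X] [NormedSpace ℝ X]

lemma HasFDerivAt.dotProduct {P W : X → ι → ℝ} {P' W' : X →L[ℝ] ι → ℝ} {x : X}
    (hP : HasFDerivAt P P' x) (hW : HasFDerivAt W W' x) :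
    HasFDerivAt (fun y => P y ⬝ᵥ W y)
      (∑ j, (P x j • (proj j).comp W' + W x j • (proj j).comp P')) x :=
  HasFDerivAt.fun_sum fun j _ => ((hasFDerivAt_pi'.1 hP) j).mul ((hasFDerivAt_pi'.1 hW) j)

lemma ContinuousLinearMap.apply_eq_dotProduct [DecidableEq ι] (ℓ : (ι → ℝ) →L[ℝ] ℝ)
    (z : ι → ℝ) : ℓ z = (fun i => ℓ (Pi.single i 1)) ⬝ᵥ z := by
  conv_lhs => rw [← Finset.univ_sum_single z]
  refine (map_sum ℓ _ _).trans (Finset.sum_congr rfl fun i _ => ?_)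
  rw [show Pi.single i (z i) = z i • Pi.single i (1 : ℝ) by simp [← Pi.single_smul'],
    map_smul, smul_eq_mul, mul_comm]

lemma fderiv_dotProduct_sub_apply_of_legendre {L : (ι → ℝ) → (ι → ℝ) → ℝ} {Q P W : X → ι → ℝ}
    {Q' P' W' : X →L[ℝ] ι → ℝ} {x : X}
    (hL : DifferentiableAt ℝ (fun z : (ι → ℝ) × (ι → ℝ) => L z.1 z.2) (Q x, W x))
    (hQ : HasFDerivAt Q Q' x) (hP : HasFDerivAt P P' x) (hW : HasFDerivAt W W' x)
    (hLeg : ∀ w, fderiv ℝ (fun v' => L (Q x) v') (W x) w = P x ⬝ᵥ w) (u : X) :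
    fderiv ℝ (fun y => P y ⬝ᵥ W y - L (Q y) (W y)) x u =
      P' u ⬝ᵥ W x - fderiv ℝ (fun q' => L q' (W x)) (Q x) (Q' u) := by
  have hLQW : HasFDerivAt (fun y => L (Q y) (W y))
      ((fderiv ℝ (fun z : (ι → ℝ) × (ι → ℝ) => L z.1 z.2) (Q x, W x)).comp (Q'.prod W')) x :=
    hL.hasFDerivAt.comp (f := fun y => (Q y, W y)) x (hQ.prodMk hW)
  rw [((hP.dotProduct hW).fun_sub hLQW).fderiv, sub_apply, comp_apply, prod_apply,
    fderiv_uncurry_apply_eq_add hL, hLeg]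
  simp only [add_apply, sum_apply, smul_apply, comp_apply, proj_apply, smul_eq_mul, dotProduct,
    Finset.sum_add_distrib, mul_comm]
  ring

end Calculus

section Hamiltonian

variable {ι : Type*} [Fintype ι] [DecidableEq ι] {L : (ι → ℝ) → (ι → ℝ) → ℝ}
  {V : (ι → ℝ) → (ι → ℝ) → ι → ℝ} {q p : ι → ℝ}

lemma fderiv_hamiltonian_momentum
    (hL : DifferentiableAt ℝ (fun z : (ι → ℝ) × (ι → ℝ) => L z.1 z.2) (q, V q p))
    (hV : DifferentiableAt ℝ (fun z : (ι → ℝ) × (ι → ℝ) => V z.1 z.2) (q, p))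
    (hLeg : (fun i => fderiv ℝ (fun v' => L q v') (V q p) (Pi.single i 1)) = p) (i : ι) :
    fderiv ℝ (fun p' => p' ⬝ᵥ V q p' - L q (V q p')) p (Pi.single i 1) = V q p i := by
  have hVp : HasFDerivAt (V q) _ p := hV.hasFDerivAt.comp p (hasFDerivAt_prodMk_right q p)
  rw [fderiv_dotProduct_sub_apply_of_legendre (P := fun p' => p') hL (hasFDerivAt_const q p)
    (hasFDerivAt_id p) hVp fun w => by rw [apply_eq_dotProduct, hLeg]]
  simp

lemma fderiv_hamiltonian_position
    (hL : DifferentiableAt ℝ (fun z : (ι → ℝ) × (ι → ℝ) => L z.1 z.2) (q, V q p))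
    (hV : DifferentiableAt ℝ (fun z : (ι → ℝ) × (ι → ℝ) => V z.1 z.2) (q, p))
    (hLeg : (fun i => fderiv ℝ (fun v' => L q v') (V q p) (Pi.single i 1)) = p) (u : ι → ℝ) :
    fderiv ℝ (fun q' => p ⬝ᵥ V q' p - L q' (V q' p)) q u =
      -fderiv ℝ (fun q' => L q' (V q p)) q u := by
  have hVq : HasFDerivAt (fun q' => V q' p) _ q :=
    hV.hasFDerivAt.comp (f := fun q' => (q', p)) q (hasFDerivAt_prodMk_left q p)
  rw [fderiv_dotProduct_sub_apply_of_legendre (Q := fun q' => q') hL (hasFDerivAt_id q)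
    (hasFDerivAt_const p q) hVq fun w => by rw [apply_eq_dotProduct, hLeg]]
  simp

end Hamiltonian

theorem fractional_HP_iff_Hamiltonian_general (n : ℕ) (a : ℝ)
    (t : ℝ) (a₀ b₀ : ℝ)
    (L : (Fin n → ℝ) → (Fin n → ℝ) → ℝ)
    (hL : ContDiff ℝ 2 (fun x : (Fin n → ℝ) × (Fin n → ℝ) => L x.1 x.2))
    -- hyperregularity: `V q` is a C¹ inverse of the Legendre map `v ↦ ∂L/∂v(q,v)`
    (V : (Fin n → ℝ) → (Fin n → ℝ) → (Fin n → ℝ))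
    (hV : ContDiff ℝ 1 (fun x : (Fin n → ℝ) × (Fin n → ℝ) => V x.1 x.2))
    (hLeg : ∀ q p, (fun i => fderiv ℝ (fun v' => L q v') (V q p) (Pi.single i 1)) = p)
    (hInv : ∀ q v, V q (fun i => fderiv ℝ (fun v' => L q v') v (Pi.single i 1)) = v)
    (H : (Fin n → ℝ) → (Fin n → ℝ) → ℝ)
    (hH : H = fun q p => (∑ i, p i * V q p i) - L q (V q p))
    (q v p : ℝ → Fin n → ℝ) :
    -- HP equations
    (∀ s ∈ Set.Icc a₀ b₀, ∀ i,
        HasDerivAt (fun s' => q s' i) (v s i) s ∧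
        HasDerivAt (fun s' => p s' i)
          (fderiv ℝ (fun q' => L q' (v s)) (q s) (Pi.single i 1) -
            p s i * ((a - 1) / (s - t))) s ∧
        p s i = fderiv ℝ (fun v' => L (q s) v') (v s) (Pi.single i 1)) ↔
    -- Hamiltonian equations (with `v` recovered from `(q,p)` via the Legendre inverse)
    ((∀ s ∈ Set.Icc a₀ b₀, ∀ i,
        HasDerivAt (fun s' => q s' i)
          (fderiv ℝ (fun p' => H (q s) p') (p s) (Pi.single i 1)) s ∧
        HasDerivAt (fun s' => p s' i)
          (-(fderiv ℝ (fun q' => H q' (p s)) (q s) (Pi.single i 1)) -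
            p s i * ((a - 1) / (s - t))) s) ∧
      ∀ s ∈ Set.Icc a₀ b₀, v s = V (q s) (p s)) := by
  have hLd := hL.differentiable two_ne_zero
  have hVd := hV.differentiable one_ne_zero
  have hHp : ∀ q p i, fderiv ℝ (fun p' => H q p') p (Pi.single i 1) = V q p i := fun q p i => by
    subst hH; exact fderiv_hamiltonian_momentum (hLd _) (hVd _) (hLeg q p) i
  have hHq : ∀ q p i, -fderiv ℝ (fun q' => H q' p) q (Pi.single i 1) =
      fderiv ℝ (fun q' => L q' (V q p)) q (Pi.single i 1) := fun q p i => by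
    subst hH; exact neg_eq_iff_eq_neg.2 (fderiv_hamiltonian_position (hLd _) (hVd _) (hLeg q p) _)
  have hLegendre : ∀ q v p, (∀ i, p i = fderiv ℝ (fun v' => L q v') v (Pi.single i 1)) ↔
      v = V q p := fun q v p =>
    ⟨fun h => funext h ▸ (hInv q v).symm, fun h i => h ▸ (congrFun (hLeg q p) i).symm⟩
  simp only [hHp, hHq]
  constructor
  · intro hHP
    have hv : ∀ s ∈ Set.Icc a₀ b₀, v s = V (q s) (p s) :=
      fun s hs => (hLegendre _ _ _).1 fun i => (hHP s hs i).2.2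
    exact ⟨fun s hs i => hv s hs ▸ ⟨(hHP s hs i).1, (hHP s hs i).2.1⟩, hv⟩
  · rintro ⟨hHam, hv⟩ s hs i
    exact ⟨hv s hs ▸ (hHam s hs i).1, hv s hs ▸ (hHam s hs i).2,
      (hLegendre _ _ _).2 (hv s hs) i⟩

/-- In the deterministic case (`γ₁ = γ₂ = 0`), with constant `α ≡ a`,
`0 < a ≤ 1`, `ρ = 0` (so `h(s,t) = (a−1)/(s−t)`), a `C¹` curve `(q,v,p)` satisfies the
generalized fractional HP equations
`dqⁱ/ds = vⁱ`, `dpᵢ/ds = ∂L/∂qⁱ − pᵢ·(a−1)/(s−t)`, `pᵢ = ∂L/∂vⁱ`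
iff `(q,p)` satisfies the generalized fractional Hamiltonian equations
`dqⁱ/ds = ∂H/∂pᵢ`, `dpᵢ/ds = −∂H/∂qⁱ − pᵢ·(a−1)/(s−t)`, where
`H(q,p) = ⟨p, v(q,p)⟩ − L(q, v(q,p))` and `v(q,p)` inverts the Legendre map `p = ∂L/∂v`
of the hyperregular Lagrangian `L`. -/
theorem fractional_HP_iff_Hamiltonian (n : ℕ) (a : ℝ) (ha : 0 < a) (ha1 : a ≤ 1)
    (t : ℝ) (a₀ b₀ : ℝ) (htI : t ∉ Set.Icc a₀ b₀)
    (L : (Fin n → ℝ) → (Fin n → ℝ) → ℝ)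
    (hL : ContDiff ℝ 2 (fun x : (Fin n → ℝ) × (Fin n → ℝ) => L x.1 x.2))
    -- hyperregularity: `V q` is a C¹ inverse of the Legendre map `v ↦ ∂L/∂v(q,v)`
    (V : (Fin n → ℝ) → (Fin n → ℝ) → (Fin n → ℝ))
    (hV : ContDiff ℝ 1 (fun x : (Fin n → ℝ) × (Fin n → ℝ) => V x.1 x.2))
    (hLeg : ∀ q p, (fun i => fderiv ℝ (fun v' => L q v') (V q p) (Pi.single i 1)) = p)
    (hInv : ∀ q v, V q (fun i => fderiv ℝ (fun v' => L q v') v (Pi.single i 1)) = v)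
    (H : (Fin n → ℝ) → (Fin n → ℝ) → ℝ)
    (hH : H = fun q p => (∑ i, p i * V q p i) - L q (V q p))
    (q v p : ℝ → Fin n → ℝ)
    (hq : ContDiffOn ℝ 1 q (Set.Icc a₀ b₀)) (hv : ContDiffOn ℝ 1 v (Set.Icc a₀ b₀))
    (hp : ContDiffOn ℝ 1 p (Set.Icc a₀ b₀)) :
    -- HP equations
    (∀ s ∈ Set.Icc a₀ b₀, ∀ i,
        HasDerivAt (fun s' => q s' i) (v s i) s ∧
        HasDerivAt (fun s' => p s' i)
          (fderiv ℝ (fun q' => L q' (v s)) (q s) (Pi.single i 1) -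
            p s i * ((a - 1) / (s - t))) s ∧
        p s i = fderiv ℝ (fun v' => L (q s) v') (v s) (Pi.single i 1)) ↔
    -- Hamiltonian equations (with `v` recovered from `(q,p)` via the Legendre inverse)
    ((∀ s ∈ Set.Icc a₀ b₀, ∀ i,
        HasDerivAt (fun s' => q s' i)
          (fderiv ℝ (fun p' => H (q s) p') (p s) (Pi.single i 1)) s ∧
        HasDerivAt (fun s' => p s' i)
          (-(fderiv ℝ (fun q' => H q' (p s)) (q s) (Pi.single i 1)) -
            p s i * ((a - 1) / (s - t))) s) ∧
      ∀ s ∈ Set.Icc a₀ b₀, v s = V (q s) (p s)) :=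
  fractional_HP_iff_Hamiltonian_general n a t a₀ b₀ L hL V hV hLeg hInv H hH q v p
end

section
/- For fixed t and t₀ < t, the kernel g_t^α(s) = (t−s)^{α(s−t)−1} e^{−ρ(s−t)}/Γ(α(s−t)) is integrable on [t₀, t) provided α is continuous with 0 < α(z) ≤ 1 for all z, so the generalized fractional integral of any bounded measurable f on [t₀,t] is well-defined and finite. -/
/-!
Since `α` is continuous and positive on the compact interval `[t₀ - t, 0]`, it is bounded below
there by some `a > 0`. As `α ≤ 1`, the exponent `α(s - t) - 1` lies in `[a - 1, 0]`, so
`(t - s) ^ (α(s - t) - 1) ≤ (t - s) ^ (a - 1) + 1`, which is integrable because `a - 1 > -1`.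
The remaining factor `e^{-ρ(s - t)} / Γ(α(s - t))` is continuous, hence bounded on `[t₀, t]`, and
so is any bounded `f`.
-/

open MeasureTheory Set

lemma Real.continuousAt_Gamma_of_pos {x : ℝ} (hx : 0 < x) : ContinuousAt Real.Gamma x :=
  (Real.differentiableAt_Gamma fun m => by linarith [(m.cast_nonneg : (0 : ℝ) ≤ m)]).continuousAt

lemma Real.rpow_le_rpow_add_one {x a b : ℝ} (hx : 0 ≤ x) (hab : a ≤ b) (hb : b ≤ 0) :
    x ^ b ≤ x ^ a + 1 := by
  rcases hx.eq_or_lt with rfl | hx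
  · linarith [Real.zero_rpow_le_one b, Real.rpow_nonneg le_rfl a]
  rcases le_or_gt x 1 with hx1 | hx1
  · linarith [Real.rpow_le_rpow_of_exponent_ge hx hx1 hab]
  · linarith [Real.rpow_le_one_of_one_le_of_nonpos hx1.le hb, Real.rpow_nonneg hx.le a]

lemma integrableOn_Icc_sub_rpow {r : ℝ} (hr : -1 < r) (t₀ t : ℝ) :
    IntegrableOn (fun s => (t - s) ^ r) (Icc t₀ t) := by
  have h : IntervalIntegrable (fun s => (t - s) ^ r) volume t t₀ := by
    simpa using
      (intervalIntegral.intervalIntegrable_rpow' hr (a := 0) (b := t - t₀)).comp_sub_left t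
  rw [intervalIntegrable_iff'] at h
  exact h.mono_set (by rw [uIcc_comm]; exact Icc_subset_uIcc)

lemma integrableOn_Icc_sub_rpow_of_le {β : ℝ → ℝ} (hβ : Measurable β) {b t₀ t : ℝ} (hb : -1 < b)
    (hβ_mem : ∀ s ∈ Icc t₀ t, b ≤ β s ∧ β s ≤ 0) :
    IntegrableOn (fun s => (t - s) ^ β s) (Icc t₀ t) := by
  have hdom : IntegrableOn (fun s => (t - s) ^ b + 1) (Icc t₀ t) :=
    (integrableOn_Icc_sub_rpow hb t₀ t).add (integrableOn_const (by simp))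
  refine hdom.mono' ((measurable_const.sub measurable_id).pow hβ).aestronglyMeasurable ?_
  refine (ae_restrict_iff' measurableSet_Icc).2 (ae_of_all _ fun s hs => ?_)
  obtain ⟨hbs, hs0⟩ := hβ_mem s hs
  rw [Real.norm_of_nonneg (Real.rpow_nonneg (sub_nonneg.2 hs.2) _)]
  exact Real.rpow_le_rpow_add_one (sub_nonneg.2 hs.2) hbs hs0

/-- For `t₀ < t` and `α` continuous with `0 < α(z) ≤ 1`, the kernel
`g_t^α(s) = (t−s)^{α(s−t)−1} e^{−ρ(s−t)} / Γ(α(s−t))` is integrable on `[t₀, t)`, so the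
generalized fractional integral of any bounded measurable `f` is well-defined and finite
(i.e. `f · g_t^α` is integrable on `[t₀, t)`). -/
theorem kernel_integrable (α : ℝ → ℝ) (hαc : Continuous α)
    (hα : ∀ z, 0 < α z ∧ α z ≤ 1) (ρ t₀ t : ℝ) (ht : t₀ < t) :
    MeasureTheory.IntegrableOn
      (fun s => (t - s) ^ (α (s - t) - 1) * Real.exp (-ρ * (s - t)) /
        Real.Gamma (α (s - t))) (Set.Ico t₀ t) ∧
    ∀ f : ℝ → ℝ, Measurable f → (∃ M, ∀ s ∈ Set.Icc t₀ t, |f s| ≤ M) →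
      MeasureTheory.IntegrableOn
        (fun s => f s * ((t - s) ^ (α (s - t) - 1) * Real.exp (-ρ * (s - t)) /
          Real.Gamma (α (s - t)))) (Set.Ico t₀ t) := by
  have hαt : Continuous fun s => α (s - t) := hαc.comp (continuous_sub_right t)
  obtain ⟨s₀, -, hs₀⟩ :=
    isCompact_Icc.exists_isMinOn (nonempty_Icc.2 ht.le) hαt.continuousOn
  have hpow : IntegrableOn (fun s => (t - s) ^ (α (s - t) - 1)) (Icc t₀ t) :=
    integrableOn_Icc_sub_rpow_of_le (β := fun s => α (s - t) - 1) (by fun_prop)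
      (b := α (s₀ - t) - 1) (by linarith [(hα (s₀ - t)).1])
      fun s hs => ⟨by linarith [isMinOn_iff.1 hs₀ s hs], by linarith [(hα (s - t)).2]⟩
  have hΓ : Continuous fun s => Real.Gamma (α (s - t)) :=
    continuous_iff_continuousAt.2 fun s =>
      (Real.continuousAt_Gamma_of_pos (hα (s - t)).1).comp (f := fun s => α (s - t))
        hαt.continuousAt
  have hφ : Continuous fun s => Real.exp (-ρ * (s - t)) / Real.Gamma (α (s - t)) :=
    (by fun_prop : Continuous fun s => Real.exp (-ρ * (s - t))).div hΓ
      fun s => (Real.Gamma_pos_of_pos (hα (s - t)).1).ne'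
  have hker : IntegrableOn (fun s => (t - s) ^ (α (s - t) - 1) * Real.exp (-ρ * (s - t)) /
      Real.Gamma (α (s - t))) (Icc t₀ t) := by
    simpa only [mul_div_assoc] using hpow.mul_continuousOn hφ.continuousOn isCompact_Icc
  refine ⟨hker.mono_set Ico_subset_Icc_self, fun f hf ⟨M, hM⟩ => ?_⟩
  exact IntegrableOn.mono_set (hker.bdd_mul hf.aestronglyMeasurable
    (ae_restrict_of_forall_mem measurableSet_Icc hM)) Ico_subset_Icc_self
end
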